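/- Let M = (1/2)[[1,0],[1,0]] be the 2×2 real matrix representing P_V P_U where U = span{(1,0)} and V = span{(1,1)} in ℝ². Then the modulus of averagedness of M equals (3 + √2)/7; concretely, for κ ∈ (0,1], the inequality ‖Mz‖² + (1-2κ)‖z‖² ≤ 2(1-κ)⟨z, Mz⟩ holds for all z ∈ ℝ² if and only if κ ≥ (3 + √2)/7. -/

import Mathlib

/-!
For a linear map `M`, writing `M = (1 - κ) Id + κ N` forces `N = κ⁻¹ (M - (1 - κ) Id)`, so `M` is
`κ`-averaged iff `‖M z - (1 - κ) z‖ ≤ κ ‖z‖` for all `z`; squaring turns this into the stated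
inequality. For `M z = (z₀/2, z₀/2)` that inequality says the binary quadratic form
`(2κ - 1) x² + 2 (1 - κ) x y + 2 (2κ - 1) y²` is positive semidefinite, i.e. `κ > 1/2` and
`(1 - κ)² ≤ 2 (2κ - 1)²`, which is exactly `κ ≥ (3 + √2)/7`.
-/

open Set RealInnerProductSpace

def Nonexpansive (T : EuclideanSpace ℝ (Fin 2) → EuclideanSpace ℝ (Fin 2)) : Prop :=
  ∀ x y, ‖T x - T y‖ ≤ ‖x - y‖

def IsAveraged (T : EuclideanSpace ℝ (Fin 2) → EuclideanSpace ℝ (Fin 2)) (κ : ℝ) : Prop :=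
  ∃ N : EuclideanSpace ℝ (Fin 2) → EuclideanSpace ℝ (Fin 2),
    Nonexpansive N ∧ ∀ x, T x = (1 - κ) • x + κ • N x

theorem norm_sub_smul_le_iff {F : Type*} [NormedAddCommGroup F] [InnerProductSpace ℝ F]
    {κ : ℝ} (hκ : 0 ≤ κ) (z w : F) :
    ‖w - (1 - κ) • z‖ ≤ κ * ‖z‖ ↔ ‖w‖ ^ 2 + (1 - 2 * κ) * ‖z‖ ^ 2 ≤ 2 * (1 - κ) * ⟪z, w⟫ := by
  have expand :
      ‖w - (1 - κ) • z‖ ^ 2 = ‖w‖ ^ 2 - 2 * (1 - κ) * ⟪z, w⟫ + (1 - κ) ^ 2 * ‖z‖ ^ 2 := by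
    rw [norm_sub_sq_real, real_inner_smul_right, real_inner_comm, norm_smul, mul_pow,
      Real.norm_eq_abs, sq_abs]
    ring
  rw [← pow_le_pow_iff_left₀ (norm_nonneg _) (by positivity) two_ne_zero, expand]
  constructor <;> intro h <;> nlinarith

section Averaged

variable {T : EuclideanSpace ℝ (Fin 2) → EuclideanSpace ℝ (Fin 2)} {κ : ℝ}

theorem IsAveraged.norm_sub_sub_smul_le (h : IsAveraged T κ) (hκ : 0 ≤ κ) (x y) :
    ‖T x - T y - (1 - κ) • (x - y)‖ ≤ κ * ‖x - y‖ := by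
  obtain ⟨N, hN, hT⟩ := h
  have : T x - T y - (1 - κ) • (x - y) = κ • (N x - N y) := by
    rw [hT, hT, smul_sub, smul_sub]; abel
  rw [this, norm_smul, Real.norm_of_nonneg hκ]
  exact mul_le_mul_of_nonneg_left (hN x y) hκ

theorem isAveraged_of_norm_sub_sub_smul_le (hκ : 0 < κ)
    (h : ∀ x y, ‖T x - T y - (1 - κ) • (x - y)‖ ≤ κ * ‖x - y‖) : IsAveraged T κ := by
  refine ⟨fun x => κ⁻¹ • (T x - (1 - κ) • x), fun x y => ?_, fun x => ?_⟩
  · rw [← smul_sub, norm_smul, norm_inv, Real.norm_of_nonneg hκ.le, inv_mul_le_iff₀ hκ]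
    calc ‖T x - (1 - κ) • x - (T y - (1 - κ) • y)‖ = ‖T x - T y - (1 - κ) • (x - y)‖ := by
          rw [smul_sub]; abel_nf
      _ ≤ κ * ‖x - y‖ := h x y
  · rw [smul_inv_smul₀ hκ.ne']; abel

theorem IsAveraged.norm_map_sub_smul_le
    {L : EuclideanSpace ℝ (Fin 2) →ₗ[ℝ] EuclideanSpace ℝ (Fin 2)} (h : IsAveraged L κ) (hκ : 0 ≤ κ)
    (z : EuclideanSpace ℝ (Fin 2)) :
    ‖L z - (1 - κ) • z‖ ≤ κ * ‖z‖ := by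
  simpa using h.norm_sub_sub_smul_le hκ z 0

theorem isAveraged_of_norm_map_sub_smul_le
    {L : EuclideanSpace ℝ (Fin 2) →ₗ[ℝ] EuclideanSpace ℝ (Fin 2)} (hκ : 0 < κ)
    (h : ∀ z, ‖L z - (1 - κ) • z‖ ≤ κ * ‖z‖) : IsAveraged L κ :=
  isAveraged_of_norm_sub_sub_smul_le hκ fun x y => by simpa only [map_sub] using h (x - y)

end Averaged

noncomputable def halfFirst : EuclideanSpace ℝ (Fin 2) →ₗ[ℝ] EuclideanSpace ℝ (Fin 2) where
  toFun z := WithLp.toLp 2 (fun _ : Fin 2 => z 0 / 2)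
  map_add' x y := by ext i; simp [add_div]
  map_smul' c x := by ext i; simp [mul_div_assoc]

theorem halfFirst_inequality_iff_form_nonneg (κ : ℝ) (z : EuclideanSpace ℝ (Fin 2)) :
    ‖halfFirst z‖ ^ 2 + (1 - 2 * κ) * ‖z‖ ^ 2 ≤ 2 * (1 - κ) * ⟪z, halfFirst z⟫ ↔
      0 ≤ (2 * κ - 1) * z 0 ^ 2 + 2 * (1 - κ) * z 0 * z 1 + 2 * (2 * κ - 1) * z 1 ^ 2 := by
  simp only [halfFirst, LinearMap.coe_mk, AddHom.coe_mk, EuclideanSpace.real_norm_sq_eq,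
    Finset.sum_const, Finset.card_univ, Fintype.card_fin, nsmul_eq_mul, Nat.cast_ofNat,
    Fin.sum_univ_two, PiLp.inner_apply, RCLike.inner_apply, Real.ringHom_apply]
  constructor <;> intro h <;> nlinarith

theorem averagedness_form_nonneg_iff (κ : ℝ) :
    (∀ x y : ℝ, 0 ≤ (2 * κ - 1) * x ^ 2 + 2 * (1 - κ) * x * y + 2 * (2 * κ - 1) * y ^ 2) ↔
      (3 + √2) / 7 ≤ κ := by
  have hs : √2 ^ 2 = 2 := Real.sq_sqrt zero_le_two
  have hs1 : 1 ≤ √2 := Real.one_lt_sqrt_two.le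
  refine ⟨fun h => ?_, fun hκ x y => ?_⟩
  · -- at `(-√2, 1)` the form equals `(4 + √2) κ - (2 + √2)`
    have := h (-√2) 1
    nlinarith
  · have hpos : 0 < 2 * κ - 1 := by nlinarith
    have hdisc : (1 - κ) ^ 2 ≤ 2 * (2 * κ - 1) ^ 2 := by
      nlinarith [mul_nonneg (by nlinarith : 0 ≤ √2 * (2 * κ - 1) - (1 - κ))
        (by nlinarith : 0 ≤ √2 * (2 * κ - 1) + (1 - κ))]
    -- `(2κ - 1)` times the form is `((2κ - 1) x + (1 - κ) y)² + (2 (2κ - 1)² - (1 - κ)²) y²`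
    nlinarith [sq_nonneg ((2 * κ - 1) * x + (1 - κ) * y),
      mul_nonneg (sub_nonneg.2 hdisc) (sq_nonneg y)]

theorem halfFirst_inequality_iff (κ : ℝ) :
    (∀ z, ‖halfFirst z‖ ^ 2 + (1 - 2 * κ) * ‖z‖ ^ 2 ≤ 2 * (1 - κ) * ⟪z, halfFirst z⟫) ↔
      (3 + √2) / 7 ≤ κ := by
  simp_rw [halfFirst_inequality_iff_form_nonneg, ← averagedness_form_nonneg_iff]
  exact ⟨fun h x y => by simpa using h !₂[x, y], fun h z => h _ _⟩

theorem modulus_example (M : EuclideanSpace ℝ (Fin 2) → EuclideanSpace ℝ (Fin 2))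
    (hM : M = fun z => (WithLp.toLp 2 (fun _ : Fin 2 => z 0 / 2) : EuclideanSpace ℝ (Fin 2))) :
    IsLeast {κ : ℝ | κ ∈ Icc (0 : ℝ) 1 ∧ IsAveraged M κ} ((3 + Real.sqrt 2) / 7) ∧
      ∀ κ ∈ Ioc (0 : ℝ) 1,
        ((∀ z : EuclideanSpace ℝ (Fin 2),
            ‖M z‖ ^ 2 + (1 - 2 * κ) * ‖z‖ ^ 2 ≤ 2 * (1 - κ) * ⟪z, M z⟫)
          ↔ (3 + Real.sqrt 2) / 7 ≤ κ) := by
  obtain rfl : M = halfFirst := hM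
  have hpos : 0 < (3 + √2) / 7 := by positivity
  have hle : (3 + √2) / 7 ≤ 1 := by linarith [Real.sqrt_two_lt_three_halves]
  refine ⟨⟨⟨⟨hpos.le, hle⟩, isAveraged_of_norm_map_sub_smul_le hpos fun z => ?_⟩, ?_⟩,
    fun κ _ => halfFirst_inequality_iff κ⟩
  · exact (norm_sub_smul_le_iff hpos.le z _).2 ((halfFirst_inequality_iff _).2 le_rfl z)
  · rintro κ ⟨⟨hκ, -⟩, hav⟩
    exact (halfFirst_inequality_iff κ).1 fun z =>
      (norm_sub_smul_le_iff hκ z _).1 (hav.norm_map_sub_smul_le hκ z)
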